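/- Let x, y ∈ L¹(0,∞). If ∫₀^∞ f(x(t)) dt ≤ ∫₀^∞ f(y(t)) dt holds for every convex function f : ℝ → ℝ with f(0) = 0 such that f∘x and f∘y are integrable, then x ≺ y, i.e., x₊ ≺≺ y₊, x₋ ≺≺ y₋, and ∫x = ∫y. -/

import Mathlib

open MeasureTheory Set

/-- Decreasing rearrangement of `|f|` with respect to Lebesgue measure on `(0,∞)`. -/
noncomputable def rearr (f : ℝ → ℝ) (t : ℝ) : ℝ :=
  sInf {s : ℝ | 0 ≤ s ∧ (volume.restrict (Set.Ioi (0:ℝ))) {x | s < |f x|} ≤ ENNReal.ofReal t}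

/-- Positive part of a function. -/
noncomputable def posPart' (f : ℝ → ℝ) : ℝ → ℝ := fun t => max (f t) 0

/-- Negative part of a function. -/
noncomputable def negPart' (f : ℝ → ℝ) : ℝ → ℝ := fun t => max (-f t) 0

/-- Hardy–Littlewood–Pólya submajorization on `(0,∞)`. -/
def SubMaj (f g : ℝ → ℝ) : Prop :=
  ∀ t : ℝ, 0 ≤ t →
    (∫ s in Set.Ioc (0:ℝ) t, rearr f s) ≤ ∫ s in Set.Ioc (0:ℝ) t, rearr g s

/-- Hardy–Littlewood–Pólya majorization on `(0,∞)`: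
`f₊ ≺≺ g₊`, `f₋ ≺≺ g₋` and `∫ f = ∫ g`. -/
def Maj (f g : ℝ → ℝ) : Prop :=
  SubMaj (posPart' f) (posPart' g) ∧ SubMaj (negPart' f) (negPart' g) ∧
    (∫ t in Set.Ioi (0:ℝ), f t) = ∫ t in Set.Ioi (0:ℝ), g t

/-!
Testing the hypothesis with `f = ±id` gives `∫ x = ∫ y`, and with `f u = (u - r)₊` and
`f u = (-u - r)₊` it gives `∫ (x₊ - r)₊ ≤ ∫ (y₊ - r)₊` and the same for the negative parts.
As the decreasing rearrangement `g*` is equimeasurable with `|g|`, the layer cake formula turns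
these into `∫ (x₊* - r)₊ ≤ ∫ (y₊* - r)₊`. With `r = y₊*(t)` and `y₊*` decreasing,
`∫₀ᵗ x₊* ≤ r t + ∫ (x₊* - r)₊ ≤ r t + ∫ (y₊* - r)₊ = ∫₀ᵗ y₊*`.
-/

open ENNReal Filter Topology

lemma lintegral_ofReal_eq_of_meas_lt_eq {α β : Type*} [MeasurableSpace α] [MeasurableSpace β]
    {μ : Measure α} {ν : Measure β} {g : α → ℝ} {h : β → ℝ}
    (hg₀ : 0 ≤ᵐ[μ] g) (hg : AEMeasurable g μ) (hh₀ : 0 ≤ᵐ[ν] h) (hh : AEMeasurable h ν)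
    (hgh : ∀ u, 0 < u → μ {a | u < g a} = ν {b | u < h b}) :
    ∫⁻ a, ENNReal.ofReal (g a) ∂μ = ∫⁻ b, ENNReal.ofReal (h b) ∂ν := by
  rw [lintegral_eq_lintegral_meas_lt μ hg₀ hg, lintegral_eq_lintegral_meas_lt ν hh₀ hh]
  exact setLIntegral_congr_fun measurableSet_Ioi fun u hu => hgh u hu

lemma lt_max_sub_zero_iff {a r u : ℝ} (hu : 0 < u) : u < max (a - r) 0 ↔ r + u < a := by
  rw [lt_max_iff, or_iff_left hu.not_gt, lt_sub_iff_add_lt']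

lemma Integrable.max_sub_zero {α : Type*} [MeasurableSpace α] {μ : Measure α} {g : α → ℝ}
    (hg : Integrable g μ) {r : ℝ} (hr : 0 ≤ r) : Integrable (fun a => max (g a - r) 0) μ :=
  hg.mono
    ((hg.aestronglyMeasurable.aemeasurable.sub_const r).max aemeasurable_const).aestronglyMeasurable
    (ae_of_all _ fun a => by
      rw [Real.norm_of_nonneg (le_max_right _ _), Real.norm_eq_abs]
      exact max_le (by linarith [le_abs_self (g a)]) (abs_nonneg _))

lemma volume_Ioi_ofReal_lt (c : ℝ≥0∞) :
    volume.restrict (Ioi (0:ℝ)) {s | ENNReal.ofReal s < c} = c := by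
  rw [Measure.restrict_apply' measurableSet_Ioi]
  rcases eq_or_ne c ∞ with rfl | hc
  · simp [Real.volume_Ioi]
  · have : {s | ENNReal.ofReal s < c} ∩ Ioi 0 = Ioo 0 c.toReal := by
      ext s
      simp only [mem_inter_iff, mem_ofPred_eq, mem_Ioi, mem_Ioo]
      exact ⟨fun ⟨h, hs⟩ => ⟨hs, (ofReal_lt_iff_lt_toReal hs.le hc).1 h⟩,
        fun ⟨hs, h⟩ => ⟨(ofReal_lt_iff_lt_toReal hs.le hc).2 h, hs⟩⟩
    rw [this, Real.volume_Ioo, sub_zero, ofReal_toReal hc]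

noncomputable def distribFun (f : ℝ → ℝ) (r : ℝ) : ℝ≥0∞ :=
  volume.restrict (Ioi (0:ℝ)) {x | r < |f x|}

section Rearrangement

variable {f : ℝ → ℝ}

lemma distribFun_antitone (f : ℝ → ℝ) : Antitone (distribFun f) := fun _ _ hrs =>
  measure_mono fun _ hx => hrs.trans_lt hx

lemma exists_lt_distribFun_of_lt {c : ℝ≥0∞} {r : ℝ} (h : c < distribFun f r) :
    ∃ r' > r, c < distribFun f r' := by
  have hU : {x | r < |f x|} = ⋃ n : ℕ, {x | r + 1 / (n + 1) < |f x|} := by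
    ext x
    simp only [mem_ofPred_eq, mem_iUnion]
    refine ⟨fun hx => ?_, fun ⟨n, hn⟩ => lt_trans (by simp; positivity) hn⟩
    obtain ⟨n, hn⟩ := exists_nat_one_div_lt (sub_pos.mpr hx)
    exact ⟨n, by linarith⟩
  have hmono : Monotone fun n : ℕ => {x | r + 1 / ((n : ℝ) + 1) < |f x|} :=
    fun n m hnm _ hx =>
    lt_of_le_of_lt (show r + 1 / ((m : ℝ) + 1) ≤ r + 1 / ((n : ℝ) + 1) by gcongr) hx
  rw [distribFun, hU, hmono.measure_iUnion, lt_iSup_iff] at h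
  obtain ⟨n, hn⟩ := h
  exact ⟨r + 1 / (n + 1), by simp; positivity, hn⟩

lemma distribFun_le_lintegral_div {r : ℝ} (hf : IntegrableOn f (Ioi 0)) (hr : 0 < r) :
    distribFun f r ≤ (∫⁻ x in Ioi 0, ENNReal.ofReal |f x|) / ENNReal.ofReal r :=
  (measure_mono fun _ hx => ENNReal.ofReal_le_ofReal (le_of_lt hx)).trans <|
    meas_ge_le_lintegral_div hf.abs.aestronglyMeasurable.aemeasurable.ennreal_ofReal
      (by simpa using hr) ofReal_ne_top

lemma exists_distribFun_le (hf : IntegrableOn f (Ioi 0)) {t : ℝ} (ht : 0 < t) :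
    ∃ s, 0 ≤ s ∧ distribFun f s ≤ ENNReal.ofReal t := by
  set I := ∫⁻ x in Ioi 0, ENNReal.ofReal |f x|
  have hI : I ≠ ∞ := (hasFiniteIntegral_iff_ofReal (ae_of_all _ fun x => abs_nonneg (f x))).1
    hf.abs.hasFiniteIntegral |>.ne
  have hlim : Tendsto (fun s => I / ENNReal.ofReal s) atTop (𝓝 0) := by
    simpa using ENNReal.Tendsto.const_div tendsto_ofReal_atTop (Or.inr hI)
  obtain ⟨s, hsI, hs⟩ :=
    ((hlim.eventually (ge_mem_nhds (ofReal_pos.2 ht))).and (eventually_gt_atTop 0)).exists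
  exact ⟨s, hs.le, (distribFun_le_lintegral_div hf hs).trans hsI⟩

lemma rearr_nonneg (f : ℝ → ℝ) (t : ℝ) : 0 ≤ rearr f t :=
  Real.sInf_nonneg fun _ hs => hs.1

lemma rearr_le_of_distribFun_le {r t : ℝ} (hr : 0 ≤ r)
    (h : distribFun f r ≤ ENNReal.ofReal t) : rearr f t ≤ r :=
  csInf_le ⟨0, fun _ hs => hs.1⟩ ⟨hr, h⟩

lemma le_rearr_of_lt_distribFun (hf : IntegrableOn f (Ioi 0)) {r t : ℝ} (ht : 0 < t)
    (h : ENNReal.ofReal t < distribFun f r) : r ≤ rearr f t :=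
  le_csInf (exists_distribFun_le hf ht) fun _ hs => not_lt.1 fun hsr =>
    (h.trans_le (distribFun_antitone f hsr.le)).not_ge hs.2

lemma lt_rearr_iff (hf : IntegrableOn f (Ioi 0)) {t r : ℝ} (ht : 0 < t) (hr : 0 ≤ r) :
    r < rearr f t ↔ ENNReal.ofReal t < distribFun f r := by
  refine ⟨fun h => not_le.1 fun h' => (rearr_le_of_distribFun_le hr h').not_gt h, fun h => ?_⟩
  obtain ⟨r', hrr', hr'⟩ := exists_lt_distribFun_of_lt h
  exact hrr'.trans_le (le_rearr_of_lt_distribFun hf ht hr')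

lemma rearr_antitoneOn (hf : IntegrableOn f (Ioi 0)) : AntitoneOn (rearr f) (Ioi 0) :=
  fun _ hs _ _ hst => csInf_le_csInf ⟨0, fun _ h => h.1⟩ (exists_distribFun_le hf hs)
    fun _ h => ⟨h.1, h.2.trans (ENNReal.ofReal_le_ofReal hst)⟩

lemma volume_lt_rearr (hf : IntegrableOn f (Ioi 0)) {r : ℝ} (hr : 0 ≤ r) :
    volume.restrict (Ioi (0:ℝ)) {s | r < rearr f s} = distribFun f r := by
  rw [← volume_Ioi_ofReal_lt (distribFun f r)]
  simp only [Measure.restrict_apply' measurableSet_Ioi]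
  congr 1
  ext s
  simp only [mem_inter_iff, mem_ofPred_eq, mem_Ioi]
  exact and_congr_left fun hs => lt_rearr_iff hf hs hr

lemma rearr_aemeasurable (hf : IntegrableOn f (Ioi 0)) :
    AEMeasurable (rearr f) (volume.restrict (Ioi 0)) :=
  aemeasurable_restrict_of_antitoneOn measurableSet_Ioi (rearr_antitoneOn hf)

lemma lintegral_rearr_max_sub (hf : IntegrableOn f (Ioi 0)) {r : ℝ} (hr : 0 ≤ r) :
    ∫⁻ s in Ioi 0, ENNReal.ofReal (max (rearr f s - r) 0) =
      ∫⁻ s in Ioi 0, ENNReal.ofReal (max (|f s| - r) 0) := by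
  refine lintegral_ofReal_eq_of_meas_lt_eq (ae_of_all _ fun _ => le_max_right _ _)
    (((rearr_aemeasurable hf).sub_const r).max aemeasurable_const)
    (ae_of_all _ fun _ => le_max_right _ _)
    ((hf.aestronglyMeasurable.aemeasurable.abs.sub_const r).max aemeasurable_const) fun u hu => ?_
  simp only [lt_max_sub_zero_iff hu]
  exact volume_lt_rearr hf (by positivity)

lemma integrableOn_rearr_max_sub (hf : IntegrableOn f (Ioi 0)) {r : ℝ} (hr : 0 ≤ r) :
    IntegrableOn (fun s => max (rearr f s - r) 0) (Ioi 0) := by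
  refine ⟨(((rearr_aemeasurable hf).sub_const r).max aemeasurable_const).aestronglyMeasurable, ?_⟩
  rw [hasFiniteIntegral_iff_ofReal (f := fun s => max (rearr f s - r) 0)
      (ae_of_all _ fun _ => le_max_right _ _), lintegral_rearr_max_sub hf hr]
  exact (hasFiniteIntegral_iff_ofReal (ae_of_all _ fun _ => le_max_right _ _)).1
    (Integrable.max_sub_zero hf.abs hr).hasFiniteIntegral

lemma integral_rearr_max_sub (hf : IntegrableOn f (Ioi 0)) {r : ℝ} (hr : 0 ≤ r) :
    ∫ s in Ioi 0, max (rearr f s - r) 0 = ∫ s in Ioi 0, max (|f s| - r) 0 := by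
  rw [integral_eq_lintegral_of_nonneg_ae (f := fun s => max (rearr f s - r) 0)
      (ae_of_all _ fun _ => le_max_right _ _)
      (integrableOn_rearr_max_sub hf hr).aestronglyMeasurable,
    integral_eq_lintegral_of_nonneg_ae (f := fun s => max (|f s| - r) 0)
      (ae_of_all _ fun _ => le_max_right _ _)
      (Integrable.max_sub_zero hf.abs hr).aestronglyMeasurable,
    lintegral_rearr_max_sub hf hr]

lemma integrableOn_rearr (hf : IntegrableOn f (Ioi 0)) : IntegrableOn (rearr f) (Ioi 0) :=
  (integrableOn_rearr_max_sub hf le_rfl).congr_fun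
    (fun s _ => by simp only [sub_zero, max_eq_left (rearr_nonneg f s)]) measurableSet_Ioi

end Rearrangement

lemma setIntegral_Ioc_le_mul_add_integral_max_sub {g : ℝ → ℝ} {r t : ℝ} (ht : 0 ≤ t)
    (hg : IntegrableOn g (Ioc 0 t)) (hgr : IntegrableOn (fun s => max (g s - r) 0) (Ioi 0)) :
    ∫ s in Ioc 0 t, g s ≤ r * t + ∫ s in Ioi 0, max (g s - r) 0 := by
  have hc : IntegrableOn (fun _ => r) (Ioc 0 t) := integrableOn_const measure_Ioc_lt_top.ne
  have hgr' : IntegrableOn (fun s => max (g s - r) 0) (Ioc 0 t) := hgr.mono_set Ioc_subset_Ioi_self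
  calc ∫ s in Ioc 0 t, g s ≤ ∫ s in Ioc 0 t, (r + max (g s - r) 0) :=
        setIntegral_mono_on hg (hc.add hgr') measurableSet_Ioc fun s _ => by
          linarith [le_max_left (g s - r) 0]
    _ = r * t + ∫ s in Ioc 0 t, max (g s - r) 0 := by
        rw [integral_add hc hgr', setIntegral_const, Real.volume_real_Ioc_of_le ht, sub_zero,
          smul_eq_mul, mul_comm]
    _ ≤ r * t + ∫ s in Ioi 0, max (g s - r) 0 := by
        grw [setIntegral_mono_set hgr (ae_of_all _ fun _ => le_max_right _ _)
          Ioc_subset_Ioi_self.eventuallyLE]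

lemma integral_max_sub_eq_of_antitoneOn {g : ℝ → ℝ} {t : ℝ} (ht : 0 < t)
    (hanti : AntitoneOn g (Ioi 0)) (hg : IntegrableOn g (Ioc 0 t)) :
    ∫ s in Ioi 0, max (g s - g t) 0 = (∫ s in Ioc 0 t, g s) - g t * t := by
  have hIoc : EqOn (fun s => max (g s - g t) 0) (fun s => g s - g t) (Ioc 0 t) :=
    fun s hs => max_eq_left (sub_nonneg.2 (hanti hs.1 ht hs.2))
  have hIoi : EqOn (fun s => max (g s - g t) 0) 0 (Ioi t) :=
    fun s hs => max_eq_right (sub_nonpos.2 (hanti ht (ht.trans hs) (le_of_lt hs)))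
  have hc : IntegrableOn (fun _ => g t) (Ioc 0 t) := integrableOn_const measure_Ioc_lt_top.ne
  rw [← Ioc_union_Ioi_eq_Ioi ht.le, setIntegral_union (Ioc_disjoint_Ioi le_rfl) measurableSet_Ioi
      ((hg.sub hc).congr_fun hIoc.symm measurableSet_Ioc)
      (integrableOn_zero.congr_fun hIoi.symm measurableSet_Ioi),
    setIntegral_congr_fun measurableSet_Ioc hIoc, setIntegral_congr_fun measurableSet_Ioi hIoi,
    integral_sub hg hc, setIntegral_const, Real.volume_real_Ioc_of_le ht.le]
  simp [mul_comm]

theorem subMaj_of_integral_max_sub_le {F G : ℝ → ℝ} (hF : IntegrableOn F (Ioi 0))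
    (hG : IntegrableOn G (Ioi 0))
    (hFG : ∀ r, 0 ≤ r → ∫ s in Ioi 0, max (|F s| - r) 0 ≤ ∫ s in Ioi 0, max (|G s| - r) 0) :
    SubMaj F G := by
  intro t ht
  obtain rfl | ht := ht.eq_or_lt
  · simp
  set r := rearr G t
  have hr : 0 ≤ r := rearr_nonneg G t
  calc ∫ s in Ioc 0 t, rearr F s ≤ r * t + ∫ s in Ioi 0, max (rearr F s - r) 0 :=
        setIntegral_Ioc_le_mul_add_integral_max_sub ht.le
          ((integrableOn_rearr hF).mono_set Ioc_subset_Ioi_self) (integrableOn_rearr_max_sub hF hr)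
    _ ≤ r * t + ∫ s in Ioi 0, max (rearr G s - r) 0 := by
        rw [integral_rearr_max_sub hF hr, integral_rearr_max_sub hG hr]
        grw [hFG r hr]
    _ = ∫ s in Ioc 0 t, rearr G s := by
        rw [integral_max_sub_eq_of_antitoneOn ht (rearr_antitoneOn hG)
          ((integrableOn_rearr hG).mono_set Ioc_subset_Ioi_self)]
        ring

lemma convexOn_max_sub_zero (r : ℝ) : ConvexOn ℝ univ fun u : ℝ => max (u - r) 0 :=
  ((convexOn_id convex_univ).sub (concaveOn_const r convex_univ)).sup (convexOn_const 0 convex_univ)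

lemma max_abs_max_zero_sub_zero {v r : ℝ} (hr : 0 ≤ r) :
    max (|max v 0| - r) 0 = max (v - r) 0 := by
  rw [abs_of_nonneg (le_max_right v 0)]
  rcases le_total v 0 with hv | hv
  · rw [max_eq_right hv, max_eq_right (by linarith), max_eq_right (by linarith)]
  · rw [max_eq_left hv]

def ConvexDominated (x y : ℝ → ℝ) : Prop :=
  ∀ f : ℝ → ℝ, ConvexOn ℝ univ f → f 0 = 0 →
    IntegrableOn (fun t => f (x t)) (Ioi 0) → IntegrableOn (fun t => f (y t)) (Ioi 0) →
    ∫ t in Ioi 0, f (x t) ≤ ∫ t in Ioi 0, f (y t)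

namespace ConvexDominated

variable {x y : ℝ → ℝ}

lemma neg (h : ConvexDominated x y) : ConvexDominated (-x) (-y) := fun f hf hf0 =>
  h (fun u => f (-u)) (hf.comp_linearMap (-LinearMap.id)) (by simpa using hf0)

lemma integral_eq (hx : IntegrableOn x (Ioi 0)) (hy : IntegrableOn y (Ioi 0))
    (h : ConvexDominated x y) : ∫ t in Ioi 0, x t = ∫ t in Ioi 0, y t :=
  le_antisymm (h id (convexOn_id convex_univ) rfl hx hy)
    (by simpa [integral_neg] using h.neg id (convexOn_id convex_univ) rfl hx.neg hy.neg)

lemma subMaj_posPart (hx : IntegrableOn x (Ioi 0)) (hy : IntegrableOn y (Ioi 0))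
    (h : ConvexDominated x y) : SubMaj (posPart' x) (posPart' y) :=
  subMaj_of_integral_max_sub_le hx.pos_part hy.pos_part fun r hr => by
    simpa only [posPart', max_abs_max_zero_sub_zero hr] using
      h (fun u => max (u - r) 0) (convexOn_max_sub_zero r) (by simpa using hr)
        (Integrable.max_sub_zero hx hr) (Integrable.max_sub_zero hy hr)

end ConvexDominated

/-- Converse: if `∫ f∘x ≤ ∫ f∘y` for all convex `f` with `f(0) = 0` making both
compositions integrable, then `x ≺ y`. -/
theorem stmt9 (x y : ℝ → ℝ) (hx : IntegrableOn x (Set.Ioi 0))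
    (hy : IntegrableOn y (Set.Ioi 0))
    (h : ∀ f : ℝ → ℝ, ConvexOn ℝ Set.univ f → f 0 = 0 →
      IntegrableOn (fun t => f (x t)) (Set.Ioi 0) →
      IntegrableOn (fun t => f (y t)) (Set.Ioi 0) →
      (∫ t in Set.Ioi (0:ℝ), f (x t)) ≤ ∫ t in Set.Ioi (0:ℝ), f (y t)) :
    Maj x y := by
  have h : ConvexDominated x y := h
  -- `negPart' x` is definitionally `posPart' (-x)`.
  exact ⟨h.subMaj_posPart hx hy, h.neg.subMaj_posPart hx.neg hy.neg, h.integral_eq hx hy⟩
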